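/- arXiv:1204.3428 — 4 statements merged into one kernel-verified Lean document; each statement's English description precedes it below -/
import Mathlib

section
/- Let (P₀,…,P_m) be a symmetric Clifford system on V = ℝ^{2n+2} and F(x) = ⟨x,x⟩² - 2∑_{i=0}^m ⟨P_i x, x⟩² the associated Cartan–Münzner polynomial. Then for J = P₀P₁ and all t ∈ ℝ and x ∈ V, F(cos(t)x + sin(t)Jx) = F(x). -/
open Matrix

/-- Invariance of the Cartan–Münzner polynomial of a symmetric Clifford system under the
circle generated by the complex structure `J = P₀P₁`:
`F(cos(t)x + sin(t)Jx) = F(x)` for all `t ∈ ℝ` and `x ∈ ℝ^{2n+2}`. -/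
theorem stmt4 {n m : ℕ} (hm : 1 ≤ m)
    (P : Fin (m + 1) → Matrix (Fin (2 * n + 2)) (Fin (2 * n + 2)) ℝ)
    (hsym : ∀ i, (P i)ᵀ = P i)
    (hcl : ∀ i j, P i * P j + P j * P i = if i = j then (2 : ℝ) • (1 : Matrix _ _ ℝ) else 0)
    (F : (Fin (2 * n + 2) → ℝ) → ℝ)
    (hF : ∀ x, F x = (x ⬝ᵥ x) ^ 2 - 2 * ∑ i, ((P i).mulVec x ⬝ᵥ x) ^ 2)
    (t : ℝ) (x : Fin (2 * n + 2) → ℝ) :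
    F (Real.cos t • x + Real.sin t • (P 0 * P 1).mulVec x) = F x := by
  obtain ⟨k, rfl⟩ : ∃ k, m = k + 1 := ⟨m - 1, by omega⟩
  have hsq : ∀ i, P i * P i = 1 := by
    intro i
    have h := hcl i i
    rw [if_pos rfl] at h
    have h2 : (2 : ℝ) • (P i * P i) = (2 : ℝ) • (1 : Matrix _ _ ℝ) := by
      rw [two_smul]; exact h
    exact smul_right_injective _ two_ne_zero h2
  have anti : ∀ i j, i ≠ j → P i * P j = -(P j * P i) := by
    intro i j hij
    have h := hcl i j
    rw [if_neg hij] at h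
    exact eq_neg_of_add_eq_zero_left h
  set c := Real.cos t with hc
  set s := Real.sin t with hs
  have hc2 : c * c + s * s = 1 := by
    have := Real.sin_sq_add_cos_sq t
    nlinarith [this]
  set J := P 0 * P 1 with hJ
  have h10 : P 1 * P 0 = -(P 0 * P 1) := anti 1 0 (by simp [Fin.ext_iff])
  have hJ2 : J * J = -1 := by
    calc J * J = P 0 * (P 1 * P 0) * P 1 := by rw [hJ]; noncomm_ring
    _ = P 0 * (-(P 0 * P 1)) * P 1 := by rw [h10]
    _ = -(P 0 * P 0 * (P 1 * P 1)) := by noncomm_ring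
    _ = -1 := by rw [hsq 0, hsq 1, one_mul]
  have hP0J : P 0 * J = P 1 := by rw [hJ, ← mul_assoc, hsq 0, one_mul]
  have hJP0 : J * P 0 = -(P 1) := by
    calc J * P 0 = P 0 * (P 1 * P 0) := by rw [hJ]; noncomm_ring
    _ = P 0 * (-(P 0 * P 1)) := by rw [h10]
    _ = -(P 0 * P 0 * P 1) := by noncomm_ring
    _ = -(P 1) := by rw [hsq 0, one_mul]
  have hP1J : P 1 * J = -(P 0) := by
    calc P 1 * J = (P 1 * P 0) * P 1 := by rw [hJ]; noncomm_ring
    _ = (-(P 0 * P 1)) * P 1 := by rw [h10]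
    _ = -(P 0 * (P 1 * P 1)) := by noncomm_ring
    _ = -(P 0) := by rw [hsq 1, mul_one]
  have hJP1 : J * P 1 = P 0 := by rw [hJ, mul_assoc, hsq 1, mul_one]
  have hJT : Jᵀ = -J := by
    rw [hJ, Matrix.transpose_mul, hsym 0, hsym 1, h10]
  set S : Matrix (Fin (2 * n + 2)) (Fin (2 * n + 2)) ℝ := c • 1 + s • J with hS
  have hST : Sᵀ = c • 1 - s • J := by
    rw [hS, Matrix.transpose_add, Matrix.transpose_smul, Matrix.transpose_smul,
      Matrix.transpose_one, hJT, smul_neg, ← sub_eq_add_neg]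
  have expand : ∀ A : Matrix (Fin (2 * n + 2)) (Fin (2 * n + 2)) ℝ,
      Sᵀ * A * S = (c * c) • A + (c * s) • (A * J) - (c * s) • (J * A)
        - (s * s) • (J * A * J) := by
    intro A
    rw [hST, hS]
    simp only [Matrix.sub_mul, Matrix.mul_sub, Matrix.add_mul, Matrix.mul_add,
      smul_mul_assoc, mul_smul_comm, Matrix.one_mul, Matrix.mul_one, smul_smul,
      Matrix.mul_assoc]
    module
  have hcomm : ∀ i : Fin (k + 1 + 1), i ≠ 0 → i ≠ 1 → P i * J = J * P i := by
    intro i h0 h1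
    calc P i * J = (P i * P 0) * P 1 := by rw [hJ, mul_assoc]
    _ = (-(P 0 * P i)) * P 1 := by rw [anti i 0 h0]
    _ = -(P 0 * (P i * P 1)) := by noncomm_ring
    _ = -(P 0 * (-(P 1 * P i))) := by rw [anti i 1 h1]
    _ = (P 0 * P 1) * P i := by noncomm_ring
  have hid0 : Sᵀ * P 0 * S = (c * c - s * s) • P 0 + (2 * (c * s)) • P 1 := by
    rw [expand (P 0), hP0J, hJP0, neg_mul, hP1J, neg_neg]
    module
  have hid1 : Sᵀ * P 1 * S = (c * c - s * s) • P 1 - (2 * (c * s)) • P 0 := by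
    rw [expand (P 1), hP1J, hJP1, hP0J]
    module
  have hidi : ∀ i : Fin (k + 1 + 1), i ≠ 0 → i ≠ 1 → Sᵀ * P i * S = P i := by
    intro i h0 h1
    rw [expand (P i), ← hcomm i h0 h1, mul_assoc, hJ2, mul_neg_one, smul_neg,
      sub_neg_eq_add]
    have : (c * c) • P i + (c * s) • (P i * J) - (c * s) • (P i * J)
        + (s * s) • P i = (c * c + s * s) • P i := by module
    rw [this, hc2, one_smul]
  have hSTS : Sᵀ * S = 1 := by
    have h1 : Sᵀ * S = Sᵀ * 1 * S := by rw [Matrix.mul_one]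
    rw [h1, expand 1]
    simp only [Matrix.one_mul, Matrix.mul_one]
    rw [hJ2, smul_neg, sub_neg_eq_add]
    have : (c * c) • (1 : Matrix (Fin (2 * n + 2)) (Fin (2 * n + 2)) ℝ)
        + (c * s) • J - (c * s) • J + (s * s) • 1 = (c * c + s * s) • 1 := by module
    rw [this, hc2, one_smul]
  have hdot : ∀ (A : Matrix (Fin (2 * n + 2)) (Fin (2 * n + 2)) ℝ)
      (v w : Fin (2 * n + 2) → ℝ), A.mulVec v ⬝ᵥ w = v ⬝ᵥ Aᵀ.mulVec w := by
    intro A v w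
    rw [Matrix.dotProduct_mulVec, Matrix.vecMul_transpose]
  have hy : c • x + s • J.mulVec x = S.mulVec x := by
    rw [hS, Matrix.add_mulVec, Matrix.smul_mulVec, Matrix.smul_mulVec,
      Matrix.one_mulVec]
  have hnorm : S.mulVec x ⬝ᵥ S.mulVec x = x ⬝ᵥ x := by
    rw [hdot S x (S.mulVec x), Matrix.mulVec_mulVec, hST]
    have : (c • 1 - s • J) * S = Sᵀ * S := by rw [hST]
    rw [this, hSTS, Matrix.one_mulVec]
  have hterm : ∀ i, (P i).mulVec (S.mulVec x) ⬝ᵥ S.mulVec x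
      = (Sᵀ * P i * S).mulVec x ⬝ᵥ x := by
    intro i
    calc (P i).mulVec (S.mulVec x) ⬝ᵥ S.mulVec x
        = (P i * S).mulVec x ⬝ᵥ S.mulVec x := by rw [Matrix.mulVec_mulVec]
      _ = x ⬝ᵥ (P i * S)ᵀ.mulVec (S.mulVec x) := hdot _ _ _
      _ = x ⬝ᵥ ((P i * S)ᵀ * S).mulVec x := by rw [Matrix.mulVec_mulVec]
      _ = ((P i * S)ᵀ * S).mulVec x ⬝ᵥ x := dotProduct_comm _ _
      _ = (Sᵀ * P i * S).mulVec x ⬝ᵥ x := by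
          rw [Matrix.transpose_mul, hsym i]
  have htail : ∀ i : Fin k, ((Sᵀ * P i.succ.succ * S).mulVec x ⬝ᵥ x) ^ 2
      = ((P i.succ.succ).mulVec x ⬝ᵥ x) ^ 2 := by
    intro i
    have h1 : (i.succ.succ : Fin (k + 1 + 1)) ≠ 1 := by
      simp only [Ne, Fin.ext_iff, Fin.val_succ, Fin.val_one]
      omega
    rw [hidi _ (Fin.succ_ne_zero _) h1]
  rw [hF, hF, hy, hnorm]
  have hsum : ∑ i, ((P i).mulVec (S.mulVec x) ⬝ᵥ S.mulVec x) ^ 2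
      = ∑ i, ((P i).mulVec x ⬝ᵥ x) ^ 2 := by
    simp only [hterm]
    simp only [Fin.sum_univ_succ, Fin.succ_zero_eq_one]
    rw [hid0, hid1, Finset.sum_congr rfl (fun i _ => htail i)]
    simp only [Matrix.add_mulVec, Matrix.sub_mulVec, Matrix.smul_mulVec,
      add_dotProduct, sub_dotProduct, smul_dotProduct, smul_eq_mul]
    linear_combination ((((P 0).mulVec x ⬝ᵥ x) ^ 2 + ((P 1).mulVec x ⬝ᵥ x) ^ 2)
      * (c * c + s * s + 1)) * hc2
  rw [hsum]
end

section
/- Let F : V → ℝ be the Cartan–Münzner polynomial of a symmetric Clifford system (P₀,…,P_m) on V, and P a unit-norm element of span{P₀,…,P_m}. Then F(Px) = F(x) for all x ∈ V. -/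
open Matrix

/-- The Cartan–Münzner polynomial `F(x) = ⟨x,x⟩² - 2∑ᵢ⟨Pᵢx,x⟩²` of a symmetric Clifford
system is invariant under every unit-norm element `P = ∑ aᵢPᵢ` of the Clifford sphere:
`F(Px) = F(x)` for all `x`. -/
theorem stmt6 {N m : ℕ}
    (P : Fin (m + 1) → Matrix (Fin N) (Fin N) ℝ)
    (hsym : ∀ i, (P i)ᵀ = P i)
    (hcl : ∀ i j, P i * P j + P j * P i = if i = j then (2 : ℝ) • (1 : Matrix _ _ ℝ) else 0)
    (F : (Fin N → ℝ) → ℝ)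
    (hF : ∀ x, F x = (x ⬝ᵥ x) ^ 2 - 2 * ∑ i, ((P i).mulVec x ⬝ᵥ x) ^ 2)
    (a : Fin (m + 1) → ℝ) (ha : ∑ i, a i ^ 2 = 1) :
    ∀ x, F ((∑ i, a i • P i).mulVec x) = F x := by
  intro x
  set Q : Matrix (Fin N) (Fin N) ℝ := ∑ i, a i • P i with hQ
  -- key dot product identity
  have key : ∀ (A B : Matrix (Fin N) (Fin N) ℝ) (y : Fin N → ℝ),
      (A.mulVec y) ⬝ᵥ (B.mulVec y) = ((Bᵀ * A).mulVec y) ⬝ᵥ y := by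
    intro A B y
    rw [Matrix.dotProduct_mulVec, ← Matrix.mulVec_transpose, Matrix.mulVec_mulVec]
  have hQT : Qᵀ = Q := by
    rw [hQ, Matrix.transpose_sum]
    refine Finset.sum_congr rfl fun i _ => ?_
    rw [Matrix.transpose_smul, hsym]
  -- Q * P i + P i * Q = (2 * a i) • 1
  have hQP : ∀ i, Q * P i + P i * Q = (2 * a i) • (1 : Matrix (Fin N) (Fin N) ℝ) := by
    intro i
    have h1 : Q * P i = ∑ j, a j • (P j * P i) := by
      rw [hQ, Finset.sum_mul]; exact Finset.sum_congr rfl fun j _ => smul_mul_assoc _ _ _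
    have h2 : P i * Q = ∑ j, a j • (P i * P j) := by
      rw [hQ, Finset.mul_sum]; exact Finset.sum_congr rfl fun j _ => (mul_smul_comm _ _ _)
    rw [h1, h2, ← Finset.sum_add_distrib]
    have : ∀ j, a j • (P j * P i) + a j • (P i * P j)
        = a j • (if i = j then (2:ℝ) • (1 : Matrix (Fin N) (Fin N) ℝ) else 0) := by
      intro j
      rw [← smul_add, ← hcl i j, add_comm]
    simp only [this, smul_ite, smul_zero]
    rw [Finset.sum_ite_eq Finset.univ i (fun j => a j • ((2:ℝ) • (1 : Matrix (Fin N) (Fin N) ℝ)))]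
    simp only [Finset.mem_univ, if_true, smul_smul]
    congr 1; ring
  have hQQ : Q * Q = 1 := by
    have h1 : Q * Q = ∑ j, a j • (P j * Q) := by
      rw [hQ, Finset.sum_mul]; exact Finset.sum_congr rfl fun j _ => smul_mul_assoc _ _ _
    have h2 : Q * Q = ∑ j, a j • (Q * P j) := by
      conv_lhs => rw [hQ, Finset.mul_sum]
      exact Finset.sum_congr rfl fun j _ => (mul_smul_comm _ _ _)
    have h3 : Q * Q + Q * Q = ∑ j, a j • ((2 * a j) • (1 : Matrix (Fin N) (Fin N) ℝ)) := by
      rw [show Q * Q + Q * Q = (∑ j, a j • (Q * P j)) + ∑ j, a j • (P j * Q) from by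
        rw [← h2, ← h1]]
      rw [← Finset.sum_add_distrib]
      exact Finset.sum_congr rfl fun j _ => by rw [← smul_add, hQP j]
    have h4 : Q * Q + Q * Q = (1 : Matrix (Fin N) (Fin N) ℝ) + 1 := by
      rw [h3]
      have : ∀ j, a j • ((2 * a j) • (1 : Matrix (Fin N) (Fin N) ℝ)) = (2 * a j ^ 2) • 1 := by
        intro j; rw [smul_smul]; congr 1; ring
      simp only [this]
      rw [← Finset.sum_smul]
      have : ∑ j, 2 * a j ^ 2 = 2 := by rw [← Finset.mul_sum, ha, mul_one]
      rw [this, two_smul]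
    have := add_right_cancel (a := Q * Q) (b := Q * Q) (c := - (Q*Q))
    -- from X + X = 1 + 1 deduce X = 1
    have h2smul : (2:ℝ) • (Q * Q) = (2:ℝ) • (1 : Matrix (Fin N) (Fin N) ℝ) := by
      rw [two_smul, two_smul]; exact h4
    have := smul_right_injective (Matrix (Fin N) (Fin N) ℝ) (two_ne_zero (α := ℝ)) h2smul
    exact this
  -- Q P i Q = (2 a i) • Q - P i
  have hQPQ : ∀ i, Q * P i * Q = (2 * a i) • Q - P i := by
    intro i
    have h1 : Q * P i = (2 * a i) • (1 : Matrix (Fin N) (Fin N) ℝ) - P i * Q := by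
      rw [← hQP i]; abel
    rw [h1, sub_mul, smul_mul_assoc, one_mul, mul_assoc, hQQ, mul_one]
  set s : ℝ := (Q.mulVec x) ⬝ᵥ x with hs
  set b : Fin (m+1) → ℝ := fun i => ((P i).mulVec x) ⬝ᵥ x with hb
  have sum_mv : (∑ i, a i • P i) *ᵥ x = ∑ i, a i • ((P i) *ᵥ x) := by
    ext j
    simp only [Matrix.mulVec, dotProduct, Matrix.sum_apply, Matrix.smul_apply,
      Finset.sum_apply, Pi.smul_apply, smul_eq_mul, Finset.sum_mul, Finset.mul_sum]
    rw [Finset.sum_comm]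
    exact Finset.sum_congr rfl fun k _ => Finset.sum_congr rfl fun i _ => by ring
  have sum_dp : ∀ (v : Fin (m+1) → (Fin N → ℝ)), (∑ i, v i) ⬝ᵥ x = ∑ i, v i ⬝ᵥ x := by
    intro v
    simp only [dotProduct, Finset.sum_apply, Finset.sum_mul]
    exact Finset.sum_comm
  have hsab : s = ∑ i, a i * b i := by
    rw [hs, hQ, sum_mv, sum_dp]
    exact Finset.sum_congr rfl fun i _ => by
      rw [smul_dotProduct, smul_eq_mul]
  -- norm preserved
  have hnorm : (Q.mulVec x) ⬝ᵥ (Q.mulVec x) = x ⬝ᵥ x := by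
    rw [key, hQT, hQQ, Matrix.one_mulVec]
  -- each term
  have hterm : ∀ i, ((P i).mulVec (Q.mulVec x)) ⬝ᵥ (Q.mulVec x) = 2 * a i * s - b i := by
    intro i
    rw [Matrix.mulVec_mulVec, key, hQT, ← mul_assoc, hQPQ i, Matrix.sub_mulVec,
      sub_dotProduct, Matrix.smul_mulVec, smul_dotProduct]
    simp only [hb, smul_eq_mul, ← hs]
  have hsum : ∑ i, ((P i).mulVec (Q.mulVec x) ⬝ᵥ (Q.mulVec x)) ^ 2 = ∑ i, b i ^ 2 := by
    simp only [hterm]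
    have expand : ∀ i, (2 * a i * s - b i) ^ 2
        = (4 * s ^ 2) * a i ^ 2 - (4 * s) * (a i * b i) + b i ^ 2 := by intro i; ring
    simp only [expand]
    rw [Finset.sum_add_distrib, Finset.sum_sub_distrib, ← Finset.mul_sum, ← Finset.mul_sum,
      ha, ← hsab]
    ring
  rw [hF, hF, hnorm, hsum]
end

section
/- Let 𝔤 = 𝔨 ⊕ 𝔭 be the Cartan decomposition of a compact semisimple Lie algebra with respect to an involution, and suppose A : 𝔭 → 𝔭 is an orthogonal transformation (with respect to the negative of the Killing form) and φ_A : 𝔨 → 𝔨 a Lie algebra automorphism satisfying A∘ad(X)|_𝔭∘A⁻¹ = ad(φ_A(X))|_𝔭 for all X ∈ 𝔨. Then the linear map φ : 𝔤 → 𝔤 defined by φ|_𝔨 = φ_A, φ|_𝔭 = A is a Lie algebra automorphism of 𝔤. -/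
/-!
On `𝔨` the map `φ` intertwines `ad`, so `ad (φ X) = φ ∘ ad X ∘ φ⁻¹` and `φ` preserves the Killing
form on `𝔨`. For `P, Q ∈ 𝔭` the defect `Z = φ⁅P, Q⁆ - ⁅φ P, φ Q⁆` lies in `𝔨`, and invariance of the
Killing form together with orthogonality of `φ` on `𝔭` gives `B(Z, φ X) = 0` for every `X ∈ 𝔨`.
Since `φ` maps `𝔨` onto `𝔨`, `B(Z, Z) = 0`, so `Z = 0` by definiteness; bilinearity does the rest.
-/

open LieAlgebra LieModule

theorem Submodule.map_linearEquiv_eq_of_isCompl {R M : Type*} [Ring R] [AddCommGroup M]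
    [Module R M] {k p : Submodule R M} (hkp : IsCompl k p) (e : M ≃ₗ[R] M)
    (hk : ∀ x ∈ k, e x ∈ k) (hp : ∀ x ∈ p, e x ∈ p) : k.map (e : M →ₗ[R] M) = k := by
  refine le_antisymm (Submodule.map_le_iff_le_comap.2 hk) fun y hy => ?_
  obtain ⟨a, b, ha, hb, hab⟩ :=
    Submodule.codisjoint_iff_exists_add_eq.mp hkp.codisjoint (e.symm y)
  have heb : e b = y - e a := by
    rw [eq_sub_iff_add_eq', ← map_add, hab, e.apply_symm_apply]
  have hb0 : b = 0 :=
    e.map_eq_zero_iff.mp <| Submodule.disjoint_def.mp hkp.disjoint _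
      (heb ▸ k.sub_mem hy (hk a ha)) (hp b hb)
  rw [hb0, add_zero] at hab
  exact ⟨a, ha, by rw [hab, LinearEquiv.coe_coe, e.apply_symm_apply]⟩

namespace LieAlgebra

variable {R L : Type*} [CommRing R] [LieRing L] [LieAlgebra R L]

theorem map_lie_comm_iff {F : Type*} [FunLike F L L] [AddMonoidHomClass F L L] (φ : F) (x y : L) :
    φ ⁅x, y⁆ = ⁅φ x, φ y⁆ ↔ φ ⁅y, x⁆ = ⁅φ y, φ x⁆ := by
  rw [← lie_skew y x, ← lie_skew (φ y), map_neg, neg_inj]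

theorem map_lie_eq_of_codisjoint {k p : Submodule R L} (hkp : Codisjoint k p) (φ : L →ₗ[R] L)
    {x : L} (hk : ∀ y ∈ k, φ ⁅x, y⁆ = ⁅φ x, φ y⁆) (hp : ∀ y ∈ p, φ ⁅x, y⁆ = ⁅φ x, φ y⁆)
    (y : L) : φ ⁅x, y⁆ = ⁅φ x, φ y⁆ :=
  LinearMap.congr_fun
    (LinearMap.ext_on_codisjoint (f := φ ∘ₗ ad R L x) (g := ad R L (φ x) ∘ₗ φ) hkp hk hp) y

theorem ad_map_eq_conj {φ : L ≃ₗ[R] L} {x : L} (hx : ∀ y, φ ⁅x, y⁆ = ⁅φ x, φ y⁆) :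
    ad R L (φ x) = φ.conj (ad R L x) := by
  ext y
  simp [LinearEquiv.conj_apply, hx]

theorem killingForm_map_map {φ : L ≃ₗ[R] L} {x y : L} (hx : ∀ z, φ ⁅x, z⁆ = ⁅φ x, φ z⁆)
    (hy : ∀ z, φ ⁅y, z⁆ = ⁅φ y, φ z⁆) :
    killingForm R L (φ x) (φ y) = killingForm R L x y := by
  rw [killingForm_apply_apply, killingForm_apply_apply, ad_map_eq_conj hx, ad_map_eq_conj hy,
    ← LinearEquiv.conj_comp, LinearMap.trace_conj']

theorem map_lie_eq_of_mem_of_isCompl {k p : Submodule R L} (hcompl : IsCompl k p)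
    (hkp : ∀ x ∈ k, ∀ y ∈ p, ⁅x, y⁆ ∈ p) (hpp : ∀ x ∈ p, ∀ y ∈ p, ⁅x, y⁆ ∈ k)
    (hB : ∀ x ∈ k, killingForm R L x x = 0 → x = 0) {φ : L ≃ₗ[R] L}
    (hφk : ∀ x ∈ k, φ x ∈ k) (hφp : ∀ x ∈ p, φ x ∈ p)
    (hφad : ∀ x ∈ k, ∀ y, φ ⁅x, y⁆ = ⁅φ x, φ y⁆)
    (hφorth : ∀ x ∈ p, ∀ y ∈ p, killingForm R L (φ x) (φ y) = killingForm R L x y)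
    {P Q : L} (hP : P ∈ p) (hQ : Q ∈ p) : φ ⁅P, Q⁆ = ⁅φ P, φ Q⁆ := by
  have hPQ := hpp P hP Q hQ
  have hZk : φ ⁅P, Q⁆ - ⁅φ P, φ Q⁆ ∈ k := k.sub_mem (hφk _ hPQ) (hpp _ (hφp P hP) _ (hφp Q hQ))
  have horth (X : L) (hX : X ∈ k) : killingForm R L (φ ⁅P, Q⁆ - ⁅φ P, φ Q⁆) (φ X) = 0 := by
    have hQX : ⁅Q, X⁆ ∈ p := by
      rw [← lie_skew]
      exact p.neg_mem (hkp X hX Q hQ)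
    rw [map_sub, LinearMap.sub_apply, sub_eq_zero]
    calc killingForm R L (φ ⁅P, Q⁆) (φ X)
        = killingForm R L ⁅P, Q⁆ X := killingForm_map_map (hφad _ hPQ) (hφad X hX)
      _ = killingForm R L P ⁅Q, X⁆ := traceForm_apply_lie_apply R L L P Q X
      _ = killingForm R L (φ P) (φ ⁅Q, X⁆) := (hφorth P hP _ hQX).symm
      _ = killingForm R L (φ P) ⁅φ Q, φ X⁆ := by
        rw [(map_lie_comm_iff φ X Q).1 (hφad X hX Q)]
      _ = killingForm R L ⁅φ P, φ Q⁆ (φ X) := (traceForm_apply_lie_apply R L L _ _ _).symm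
  obtain ⟨X, hX, hXZ⟩ := Submodule.map_linearEquiv_eq_of_isCompl hcompl φ hφk hφp ▸ hZk
  exact sub_eq_zero.mp (hB _ hZk (hXZ ▸ horth X hX))

end LieAlgebra

theorem stmt8_general {𝔤 : Type*} [LieRing 𝔤] [LieAlgebra ℝ 𝔤]
    (k p : Submodule ℝ 𝔤) (hcompl : IsCompl k p)
    (hkp : ∀ x ∈ k, ∀ y ∈ p, ⁅x, y⁆ ∈ p)
    (hpp : ∀ x ∈ p, ∀ y ∈ p, ⁅x, y⁆ ∈ k)
    (hB : ∀ x : 𝔤, x ≠ 0 → killingForm ℝ 𝔤 x x < 0)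
    (φ : 𝔤 ≃ₗ[ℝ] 𝔤)
    (hφk : ∀ x ∈ k, φ x ∈ k) (hφp : ∀ x ∈ p, φ x ∈ p)
    (hφliek : ∀ x ∈ k, ∀ y ∈ k, φ ⁅x, y⁆ = ⁅φ x, φ y⁆)
    (hφorth : ∀ x ∈ p, ∀ y ∈ p, killingForm ℝ 𝔤 (φ x) (φ y) = killingForm ℝ 𝔤 x y)
    (hφint : ∀ X ∈ k, ∀ P ∈ p, φ ⁅X, P⁆ = ⁅φ X, φ P⁆) :
    ∀ x y : 𝔤, φ ⁅x, y⁆ = ⁅φ x, φ y⁆ := by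
  have hcod := hcompl.codisjoint
  have hφad_k (X : 𝔤) (hX : X ∈ k) (y : 𝔤) : φ ⁅X, y⁆ = ⁅φ X, φ y⁆ :=
    map_lie_eq_of_codisjoint hcod φ (hφliek X hX) (hφint X hX) y
  have hanis (x : 𝔤) (_ : x ∈ k) (hx : killingForm ℝ 𝔤 x x = 0) : x = 0 :=
    by_contra fun hne => (hB x hne).ne hx
  have hφad_p (P : 𝔤) (hP : P ∈ p) (y : 𝔤) : φ ⁅P, y⁆ = ⁅φ P, φ y⁆ :=
    map_lie_eq_of_codisjoint hcod φ (fun X hX => (map_lie_comm_iff φ X P).1 (hφad_k X hX P))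
      (fun _ hQ => map_lie_eq_of_mem_of_isCompl hcompl hkp hpp hanis hφk hφp hφad_k hφorth hP hQ) y
  intro x y
  exact (map_lie_comm_iff φ y x).1 <| map_lie_eq_of_codisjoint hcod φ
    (fun X hX => (map_lie_comm_iff φ X y).1 (hφad_k X hX y))
    (fun P hP => (map_lie_comm_iff φ P y).1 (hφad_p P hP y)) x

/-- Let `𝔤 = 𝔨 ⊕ 𝔭` be an effective Cartan decomposition of a compact semisimple real Lie
algebra (negative definite Killing form), and let `φ : 𝔤 → 𝔤` be a linear bijection
preserving `𝔨` and `𝔭`, restricting to a Lie algebra automorphism on `𝔨`, orthogonal on `𝔭`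
with respect to (minus) the Killing form, and intertwining the adjoint action in the sense
`φ⁅X,P⁆ = ⁅φX, φP⁆` for `X ∈ 𝔨`, `P ∈ 𝔭` (i.e. `A ∘ ad(X)|𝔭 ∘ A⁻¹ = ad(φ_A X)|𝔭`).
Then `φ` is a Lie algebra automorphism of `𝔤`. -/
theorem stmt8 {𝔤 : Type*} [LieRing 𝔤] [LieAlgebra ℝ 𝔤] [Module.Finite ℝ 𝔤]
    (k p : Submodule ℝ 𝔤) (hcompl : IsCompl k p)
    (hkk : ∀ x ∈ k, ∀ y ∈ k, ⁅x, y⁆ ∈ k)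
    (hkp : ∀ x ∈ k, ∀ y ∈ p, ⁅x, y⁆ ∈ p)
    (hpp : ∀ x ∈ p, ∀ y ∈ p, ⁅x, y⁆ ∈ k)
    (hB : ∀ x : 𝔤, x ≠ 0 → killingForm ℝ 𝔤 x x < 0)
    (heff : ∀ X ∈ k, (∀ P ∈ p, ⁅X, P⁆ = (0 : 𝔤)) → X = 0)
    (φ : 𝔤 ≃ₗ[ℝ] 𝔤)
    (hφk : ∀ x ∈ k, φ x ∈ k) (hφp : ∀ x ∈ p, φ x ∈ p)
    (hφliek : ∀ x ∈ k, ∀ y ∈ k, φ ⁅x, y⁆ = ⁅φ x, φ y⁆)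
    (hφorth : ∀ x ∈ p, ∀ y ∈ p, killingForm ℝ 𝔤 (φ x) (φ y) = killingForm ℝ 𝔤 x y)
    (hφint : ∀ X ∈ k, ∀ P ∈ p, φ ⁅X, P⁆ = ⁅φ X, φ P⁆) :
    ∀ x y : 𝔤, φ ⁅x, y⁆ = ⁅φ x, φ y⁆ :=
  stmt8_general k p hcompl hkp hpp hB φ hφk hφp hφliek hφorth hφint
end

section
/- The commutant in End_ℝ(⊕_{i=1}^k D) of the diagonal image of the full matrix algebra 𝕂(r) ≅ End_𝕂(D) (where D = 𝕂^r, 𝕂 ∈ {ℝ, ℂ, ℍ}) is isomorphic as an ℝ-algebra to 𝕂(k), the algebra of k×k matrices over 𝕂. -/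
noncomputable def diagAct (𝕂 : Type) [Ring 𝕂] [Algebra ℝ 𝕂] (r k : ℕ)
    (f : Module.End 𝕂 (Fin r → 𝕂)) :
    Module.End ℝ (Fin k → Fin r → 𝕂) :=
  LinearMap.pi fun i => (f.restrictScalars ℝ).comp (LinearMap.proj i)

noncomputable def diagCommutant (𝕂 : Type) [Ring 𝕂] [Algebra ℝ 𝕂] (r k : ℕ) :
    Subalgebra ℝ (Module.End ℝ (Fin k → Fin r → 𝕂)) :=
  Subalgebra.centralizer ℝ (Set.range (diagAct 𝕂 r k))

section Aux
variable (𝕂 : Type) [Ring 𝕂] [Algebra ℝ 𝕂] (r k : ℕ)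

/-- `Φ q` : the ℝ-linear endomorphism `v ↦ fun i => ∑ j, q i j • v j`. -/
noncomputable def Phi (q : Matrix (Fin k) (Fin k) 𝕂) :
    Module.End ℝ (Fin k → Fin r → 𝕂) where
  toFun v i := ∑ j, q i j • v j
  map_add' v w := by
    funext i
    simp [smul_add, Finset.sum_add_distrib]
  map_smul' a v := by
    funext i
    simp only [Pi.smul_apply, RingHom.id_apply, Finset.smul_sum]
    refine Finset.sum_congr rfl fun j _ => ?_
    exact smul_comm _ _ _

lemma Phi_apply (q : Matrix (Fin k) (Fin k) 𝕂) (v : Fin k → Fin r → 𝕂) (i : Fin k) :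
    Phi 𝕂 r k q v i = ∑ j, q i j • v j := rfl

lemma diagAct_apply (f : Module.End 𝕂 (Fin r → 𝕂)) (v : Fin k → Fin r → 𝕂) (i : Fin k) :
    diagAct 𝕂 r k f v i = f (v i) := rfl

noncomputable def PhiAlg : Matrix (Fin k) (Fin k) 𝕂 →ₐ[ℝ] Module.End ℝ (Fin k → Fin r → 𝕂) where
  toFun := Phi 𝕂 r k
  map_one' := by
    refine LinearMap.ext fun v => funext fun i => ?_
    simp [Phi_apply, Matrix.one_apply, ite_smul]
  map_mul' q q' := by
    refine LinearMap.ext fun v => funext fun i => ?_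
    simp only [Module.End.mul_apply, Phi_apply, Matrix.mul_apply, Finset.sum_smul,
      Finset.smul_sum, smul_smul]
    rw [Finset.sum_comm]
  map_zero' := by
    refine LinearMap.ext fun v => funext fun i => ?_
    simp [Phi_apply]
  map_add' q q' := by
    refine LinearMap.ext fun v => funext fun i => ?_
    simp [Phi_apply, add_smul, Finset.sum_add_distrib]
  commutes' a := by
    refine LinearMap.ext fun v => funext fun i => ?_
    simp [Phi_apply, Matrix.algebraMap_eq_diagonal, Matrix.diagonal_apply, ite_smul,
      Module.algebraMap_end_apply, algebraMap_smul]

lemma PhiAlg_mem_commutant (q : Matrix (Fin k) (Fin k) 𝕂) :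
    PhiAlg 𝕂 r k q ∈ diagCommutant 𝕂 r k := by
  rw [diagCommutant, Subalgebra.mem_centralizer_iff]
  rintro - ⟨f, rfl⟩
  refine LinearMap.ext fun v => funext fun i => ?_
  simp only [Module.End.mul_apply, diagAct_apply, PhiAlg, AlgHom.coe_mk, RingHom.coe_mk,
    MonoidHom.coe_mk, OneHom.coe_mk, Phi_apply, map_sum]
  refine Finset.sum_congr rfl fun j _ => ?_
  exact (f.map_smul _ _)

end Aux

lemma key (𝕂 : Type) [Ring 𝕂] [Algebra ℝ 𝕂] (r k : ℕ) (hr : 0 < r) :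
    Nonempty (diagCommutant 𝕂 r k ≃ₐ[ℝ] Matrix (Fin k) (Fin k) 𝕂) := by
  set i₀ : Fin r := ⟨0, hr⟩
  -- codomain-restricted algebra hom
  let F : Matrix (Fin k) (Fin k) 𝕂 →ₐ[ℝ] diagCommutant 𝕂 r k :=
    (PhiAlg 𝕂 r k).codRestrict _ (PhiAlg_mem_commutant 𝕂 r k)
  have hval : ∀ (q : Matrix (Fin k) (Fin k) 𝕂) (i j : Fin k),
      Phi 𝕂 r k q (Pi.single j (Pi.single i₀ (1 : 𝕂))) i i₀ = q i j := by
    intro q i j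
    have hsum : Phi 𝕂 r k q (Pi.single j (Pi.single i₀ (1 : 𝕂))) i
        = q i j • (Pi.single i₀ (1 : 𝕂) : Fin r → 𝕂) := by
      rw [Phi_apply]
      rw [Finset.sum_eq_single j (fun c _ hc => by simp [Pi.single_eq_of_ne hc])
        (fun h => absurd (Finset.mem_univ j) h)]
      simp
    rw [hsum]
    simp
  have hinj : Function.Injective F := by
    intro q q' h
    have h2 : Phi 𝕂 r k q = Phi 𝕂 r k q' := congrArg Subtype.val h
    ext i j
    rw [← hval q i j, ← hval q' i j, h2]
  have hsurj : Function.Surjective F := by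
    rintro ⟨U, hU⟩
    rw [diagCommutant, Subalgebra.mem_centralizer_iff] at hU
    set ε : Fin r → 𝕂 := Pi.single i₀ 1 with hε
    set q : Matrix (Fin k) (Fin k) 𝕂 := fun i j => U (Pi.single j ε) i i₀ with hq
    refine ⟨q, ?_⟩
    apply Subtype.ext
    show Phi 𝕂 r k q = U
    -- key single computation
    have hsingle : ∀ (j : Fin k) (v : Fin r → 𝕂),
        U (Pi.single j v) = fun i => q i j • v := by
      intro j v
      set f : Module.End 𝕂 (Fin r → 𝕂) := (LinearMap.proj i₀).smulRight v with hf
      have hcomm := hU (diagAct 𝕂 r k f) ⟨f, rfl⟩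
      have hfε : f ε = v := by simp [hf, hε]
      have hdiag : diagAct 𝕂 r k f (Pi.single j ε) = Pi.single j v := by
        funext i
        rw [diagAct_apply]
        rcases eq_or_ne i j with rfl | hij
        · simp [hfε]
        · simp [Pi.single_eq_of_ne hij]
      have h1 : U (Pi.single j v) = diagAct 𝕂 r k f (U (Pi.single j ε)) := by
        calc U (Pi.single j v) = U (diagAct 𝕂 r k f (Pi.single j ε)) := by rw [hdiag]
        _ = (U * diagAct 𝕂 r k f) (Pi.single j ε) := rfl
        _ = (diagAct 𝕂 r k f * U) (Pi.single j ε) := by rw [hcomm]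
        _ = diagAct 𝕂 r k f (U (Pi.single j ε)) := rfl
      funext i
      rw [h1, diagAct_apply, hf]
      simp [hq]
    refine LinearMap.ext fun v => funext fun i => ?_
    have hv : v = ∑ j, Pi.single j (v j) := (Finset.univ_sum_single v).symm
    calc Phi 𝕂 r k q v i = ∑ j, q i j • v j := rfl
    _ = ∑ j, U (Pi.single j (v j)) i := by
        refine Finset.sum_congr rfl fun j _ => ?_
        rw [hsingle j (v j)]
    _ = U (∑ j, Pi.single j (v j)) i := by simp
    _ = U v i := by rw [← hv]
  exact ⟨(AlgEquiv.ofBijective F ⟨hinj, hsurj⟩).symm⟩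

/-- For `𝕂 ∈ {ℝ, ℂ, ℍ}` and `D = 𝕂^r` the irreducible `𝕂(r)`-module, the commutant in
`End_ℝ(⊕_{i=1}^k D)` of the diagonal image of the matrix algebra `𝕂(r) ≅ End_𝕂(D)` is
isomorphic as an ℝ-algebra to the algebra `𝕂(k)` of `k × k` matrices over `𝕂`. -/
theorem stmt11 (r k : ℕ) (hr : 0 < r) :
    Nonempty (diagCommutant ℝ r k ≃ₐ[ℝ] Matrix (Fin k) (Fin k) ℝ) ∧
    Nonempty (diagCommutant ℂ r k ≃ₐ[ℝ] Matrix (Fin k) (Fin k) ℂ) ∧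
    Nonempty (diagCommutant (Quaternion ℝ) r k ≃ₐ[ℝ] Matrix (Fin k) (Fin k) (Quaternion ℝ)) := by
  exact ⟨key ℝ r k hr, key ℂ r k hr, key (Quaternion ℝ) r k hr⟩
end
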